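/- arXiv:2209.12231 — 3 statements merged into one kernel-verified Lean document; each statement's English description precedes it below -/
import Mathlib

section
/- Suppose Y=Φθ₀+V, Φ∈ℝ^{N×n} has full column rank, P(η)∈ℝ^{n×n} is invertible and Ŝ(η)=P(η)+σ̂²(ΦᵀΦ)⁻¹ is invertible. Then the RLS estimator θ̂^R(η)=(ΦᵀΦ+σ̂²P(η)⁻¹)⁻¹ΦᵀY satisfies the exact decomposition θ̂^R(η) = θ₀ + (ΦᵀΦ)⁻¹ΦᵀV − (1/N)·σ̂²·[N(ΦᵀΦ)⁻¹]·Ŝ(η)⁻¹·θ̂^LS, where θ̂^LS=(ΦᵀΦ)⁻¹ΦᵀY. -/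
open Matrix

/-! Writing `A = ΦᵀΦ` and `Ŝ = P + σ̂² A⁻¹`, the regularized normal matrix factors as
`A + σ̂² P⁻¹ = P⁻¹ Ŝ A`, so its inverse is `A⁻¹ Ŝ⁻¹ P = A⁻¹ - σ̂² A⁻¹ Ŝ⁻¹ A⁻¹`
(substitute `P = Ŝ - σ̂² A⁻¹`). Applied to `ΦᵀY`, the first term gives the least squares
estimate `A⁻¹ΦᵀY = θ₀ + A⁻¹ΦᵀV` and the second the bias term. -/

namespace Matrix

variable {m n K : Type*} [Fintype m] [Fintype n] [DecidableEq n]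

theorem isUnit_of_rank_eq_card [Field K] {A : Matrix n n K} (h : A.rank = Fintype.card n) :
    IsUnit A := by
  have range_eq_top : LinearMap.range A.mulVecLin = ⊤ := by
    apply Submodule.eq_top_of_finrank_eq
    rw [← rank, h, Module.finrank_fintype_fun_eq_card]
  exact mulVec_surjective_iff_isUnit.mp (LinearMap.range_eq_top.mp range_eq_top)

theorem isUnit_det_transpose_mul_self_of_rank_eq_card [Field K] [LinearOrder K]
    [IsStrictOrderedRing K] {Φ : Matrix m n K} (h : Φ.rank = Fintype.card n) :
    IsUnit (Φᵀ * Φ).det :=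
  (isUnit_iff_isUnit_det _).mp (isUnit_of_rank_eq_card (by rwa [rank_transpose_mul_self]))

theorem inv_add_smul_inv_eq_sub [CommRing K] {A P : Matrix n n K} (c : K) (hA : IsUnit A.det)
    (hP : IsUnit P.det) (hS : IsUnit (P + c • A⁻¹).det) :
    (A + c • P⁻¹)⁻¹ = A⁻¹ - c • (A⁻¹ * (P + c • A⁻¹)⁻¹ * A⁻¹) := by
  set S := P + c • A⁻¹ with hSdef
  have factor : A + c • P⁻¹ = P⁻¹ * (S * A) := by
    rw [hSdef, add_mul, Matrix.smul_mul, nonsing_inv_mul A hA, mul_add, Matrix.mul_smul, mul_one,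
      ← Matrix.mul_assoc, nonsing_inv_mul P hP, Matrix.one_mul]
  have hP_sub : P = S - c • A⁻¹ := by rw [hSdef, add_sub_cancel_right]
  rw [factor, mul_inv_rev, mul_inv_rev, nonsing_inv_nonsing_inv P hP, hP_sub, mul_sub,
    Matrix.mul_assoc A⁻¹ S⁻¹ S, nonsing_inv_mul S hS, mul_one, Matrix.mul_smul]

theorem inv_mulVec_transpose_mulVec_of_eq_add [CommRing K] {Φ : Matrix m n K}
    (hA : IsUnit (Φᵀ * Φ).det) {θ₀ : n → K} {V Y : m → K} (hY : Y = Φ *ᵥ θ₀ + V) :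
    (Φᵀ * Φ)⁻¹ *ᵥ (Φᵀ *ᵥ Y) = θ₀ + (Φᵀ * Φ)⁻¹ *ᵥ (Φᵀ *ᵥ V) := by
  rw [hY, mulVec_add, mulVec_add, mulVec_mulVec θ₀, mulVec_mulVec, nonsing_inv_mul _ hA,
    one_mulVec]

end Matrix

theorem stmt6_general (n N : ℕ) (hN : 0 < N)
    (Φ : Matrix (Fin N) (Fin n) ℝ) (hrank : Φ.rank = n)
    (θ0 : Fin n → ℝ) (V : Fin N → ℝ) (Y : Fin N → ℝ)
    (hY : Y = Φ *ᵥ θ0 + V)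
    (σhat2 : ℝ)
    (P : Matrix (Fin n) (Fin n) ℝ) (hP : IsUnit P.det)
    (hS : IsUnit (P + σhat2 • (Φᵀ * Φ)⁻¹).det) :
    (Φᵀ * Φ + σhat2 • P⁻¹)⁻¹ *ᵥ (Φᵀ *ᵥ Y) =
      θ0 + (Φᵀ * Φ)⁻¹ *ᵥ (Φᵀ *ᵥ V) -
        ((N : ℝ)⁻¹ * σhat2) •
          (((N : ℝ) • (Φᵀ * Φ)⁻¹ * (P + σhat2 • (Φᵀ * Φ)⁻¹)⁻¹) *ᵥ
            ((Φᵀ * Φ)⁻¹ *ᵥ (Φᵀ *ᵥ Y))) := by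
  have hA : IsUnit (Φᵀ * Φ).det :=
    isUnit_det_transpose_mul_self_of_rank_eq_card (by rw [hrank, Fintype.card_fin])
  have hNσ : (N : ℝ)⁻¹ * σhat2 * N = σhat2 := by field_simp
  rw [inv_add_smul_inv_eq_sub σhat2 hA hP hS, sub_mulVec,
    ← inv_mulVec_transpose_mulVec_of_eq_add hA hY, smul_mul_assoc, smul_mulVec, smul_mulVec,
    smul_smul, hNσ]
  simp only [mulVec_mulVec, Matrix.mul_assoc]

/-- Exact decomposition of the regularized least squares estimator:
`θ̂^R(η) = θ₀ + (ΦᵀΦ)⁻¹ΦᵀV − (1/N) σ̂² [N(ΦᵀΦ)⁻¹] Ŝ(η)⁻¹ θ̂^LS`. -/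
theorem stmt6 (n N : ℕ) (hN : 0 < N) (hnN : n < N)
    (Φ : Matrix (Fin N) (Fin n) ℝ) (hrank : Φ.rank = n)
    (θ0 : Fin n → ℝ) (V : Fin N → ℝ) (Y : Fin N → ℝ)
    (hY : Y = Φ *ᵥ θ0 + V)
    (σhat2 : ℝ) (hσhat2 : 0 ≤ σhat2)
    (P : Matrix (Fin n) (Fin n) ℝ) (hP : IsUnit P.det)
    (hS : IsUnit (P + σhat2 • (Φᵀ * Φ)⁻¹).det) :
    (Φᵀ * Φ + σhat2 • P⁻¹)⁻¹ *ᵥ (Φᵀ *ᵥ Y) =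
      θ0 + (Φᵀ * Φ)⁻¹ *ᵥ (Φᵀ *ᵥ V) -
        ((N : ℝ)⁻¹ * σhat2) •
          (((N : ℝ) • (Φᵀ * Φ)⁻¹ * (P + σhat2 • (Φᵀ * Φ)⁻¹)⁻¹) *ᵥ
            ((Φᵀ * Φ)⁻¹ *ᵥ (Φᵀ *ᵥ Y))) :=
  stmt6_general n N hN Φ hrank θ0 V Y hY σhat2 P hP hS
end

section
/- Let Σ=Σ_{i=1}^n λ_i(Σ)e_{Σ,i}e_{Σ,i}ᵀ be the eigenvalue decomposition of Σ with λ₁(Σ)≥…≥λₙ(Σ)>0 and cond(Σ)=λ₁(Σ)/λₙ(Σ). If σ², θ₀, P, the eigenvectors e_{Σ,1},…,e_{Σ,n} and the eigenvalues λ₁(Σ),…,λ_{n−1}(Σ) are fixed, then Tr[V_b^H(η*_b)] increases as λₙ(Σ) decreases (i.e. as cond(Σ) increases). Moreover, if e_{Σ,n}ᵀB_b(η*_b)ᵀA_b(η*_b)⁻¹ ≠ 0, then there exist constants B_L^b, B_U^b > 0, independent of cond(Σ), such that (B_L^b/λ₁(Σ))·cond(Σ) ≤ Tr[V_b^H(η*_b)]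 ≤ (B_U^b/λ₁(Σ))·cond(Σ). -/
open Matrix

/-- `Σ` reconstructed from its eigenvalue decomposition, with the smallest
eigenvalue `λₙ` replaced by the parameter `lam`. -/
noncomputable def SigOf {n : ℕ} (hn : 0 < n) (eig : Fin n → ℝ)
    (evec : Fin n → (Fin n → ℝ)) (lam : ℝ) : Matrix (Fin n) (Fin n) ℝ :=
  ∑ i : Fin n,
    (if i = (⟨n - 1, Nat.sub_lt hn one_pos⟩ : Fin n) then lam else eig i) •
      vecMulVec (evec i) (evec i)

/-- `Tr[V_b^H(η*_b)] = Tr[4σ² A_b⁻¹ B_b Σ⁻¹ B_bᵀ A_b⁻¹]` as a function of the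
smallest eigenvalue of `Σ`. -/
noncomputable def TrVbH {n p : ℕ} (hn : 0 < n) (σ2 : ℝ)
    (A : Matrix (Fin p) (Fin p) ℝ) (B : Matrix (Fin p) (Fin n) ℝ)
    (eig : Fin n → ℝ) (evec : Fin n → (Fin n → ℝ)) (lam : ℝ) : ℝ :=
  ((4 * σ2) • (A⁻¹ * B * (SigOf hn eig evec lam)⁻¹ * Bᵀ * A⁻¹)).trace

lemma sigOf_eq {n : ℕ} (hn : 0 < n) (eig : Fin n → ℝ) (evec : Fin n → Fin n → ℝ) (lam : ℝ) :
    SigOf hn eig evec lam =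
      (Matrix.of evec)ᵀ *
        Matrix.diagonal (fun i => if i = (⟨n - 1, Nat.sub_lt hn one_pos⟩ : Fin n) then lam else eig i) *
        Matrix.of evec := by
  ext a b
  simp [SigOf, Matrix.mul_apply, Matrix.vecMulVec_apply, Matrix.diagonal_apply,
    Matrix.sum_apply, Finset.sum_mul, Finset.mul_sum]
  apply Finset.sum_congr rfl
  intro i _
  split <;> simp [Matrix.smul_apply, Matrix.vecMulVec_apply] <;> ring

lemma TrVbH_eq {n p : ℕ} (hn : 0 < n) (σ2 : ℝ)
    (A : Matrix (Fin p) (Fin p) ℝ) (hA : A.PosDef)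
    (B : Matrix (Fin p) (Fin n) ℝ)
    (eig : Fin n → ℝ) (evec : Fin n → (Fin n → ℝ))
    (horth : ∀ i j : Fin n, evec i ⬝ᵥ evec j = if i = j then (1 : ℝ) else 0)
    (lam : ℝ)
    (hμ : ∀ i : Fin n, (if i = (⟨n - 1, Nat.sub_lt hn one_pos⟩ : Fin n) then lam else eig i) ≠ 0) :
    TrVbH hn σ2 A B eig evec lam =
      4 * σ2 * ∑ i : Fin n,
        (if i = (⟨n - 1, Nat.sub_lt hn one_pos⟩ : Fin n) then lam else eig i)⁻¹ *
          ∑ j : Fin p, ((Matrix.of evec * Bᵀ * A⁻¹) i j) ^ 2 := by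
  set E : Matrix (Fin n) (Fin n) ℝ := Matrix.of evec with hE
  set μ : Fin n → ℝ := fun i => if i = (⟨n - 1, Nat.sub_lt hn one_pos⟩ : Fin n) then lam else eig i with hμdef
  have hEEt : E * Eᵀ = 1 := by
    ext i j
    simpa [hE, Matrix.mul_apply, Matrix.one_apply, dotProduct] using horth i j
  have hEtE : Eᵀ * E = 1 := mul_eq_one_comm.mp hEEt
  have hinv : (SigOf hn eig evec lam)⁻¹ = Eᵀ * Matrix.diagonal (fun i => (μ i)⁻¹) * E := by
    rw [sigOf_eq]
    apply Matrix.inv_eq_right_inv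
    calc (Eᵀ * Matrix.diagonal μ * E) * (Eᵀ * Matrix.diagonal (fun i => (μ i)⁻¹) * E)
        = Eᵀ * Matrix.diagonal μ * (E * Eᵀ) * Matrix.diagonal (fun i => (μ i)⁻¹) * E := by
          noncomm_ring
      _ = Eᵀ * (Matrix.diagonal μ * Matrix.diagonal (fun i => (μ i)⁻¹)) * E := by
          rw [hEEt]; noncomm_ring
      _ = 1 := by
          rw [Matrix.diagonal_mul_diagonal]
          have : (fun i => μ i * (μ i)⁻¹) = fun _ => (1:ℝ) := by
            funext i; exact mul_inv_cancel₀ (hμ i)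
          rw [this, Matrix.diagonal_one, Matrix.mul_one, hEtE]
  have hAT : Aᵀ = A := by
    have := hA.isHermitian
    rwa [Matrix.IsHermitian, Matrix.conjTranspose_eq_transpose_of_trivial] at this
  have hAinvT : A⁻¹ᵀ = A⁻¹ := by
    rw [Matrix.transpose_nonsing_inv, hAT]
  set M : Matrix (Fin n) (Fin p) ℝ := E * Bᵀ * A⁻¹ with hM
  have hMT : Mᵀ = A⁻¹ * B * Eᵀ := by
    rw [hM, Matrix.transpose_mul, Matrix.transpose_mul, hAinvT, Matrix.transpose_transpose,
      Matrix.mul_assoc]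
  have hre : A⁻¹ * B * (SigOf hn eig evec lam)⁻¹ * Bᵀ * A⁻¹
      = Mᵀ * (Matrix.diagonal (fun i => (μ i)⁻¹) * M) := by
    rw [hinv, hMT, hM]; simp only [Matrix.mul_assoc]
  have key : (Mᵀ * ((Matrix.diagonal fun i => (μ i)⁻¹) * M)).trace
      = ∑ i : Fin n, (μ i)⁻¹ * ∑ j : Fin p, (M i j)^2 := by
    rw [Matrix.trace_mul_comm]
    simp [Matrix.trace, Matrix.diag, Matrix.mul_apply, Matrix.diagonal_apply,
      Finset.mul_sum, sq, mul_assoc]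
  rw [TrVbH, hre, Matrix.trace_smul, key]
  simp only [smul_eq_mul, hM, hμdef]

/-- With `σ², θ₀, P` (hence `A_b, B_b`), the eigenvectors and the
top `n−1` eigenvalues of `Σ` fixed, `Tr[V_b^H(η*_b)]` increases as `λₙ(Σ)` decreases;
and if `e_{Σ,n}ᵀ B_bᵀ A_b⁻¹ ≠ 0` there are constants `B_L^b, B_U^b > 0`, independent
of `cond(Σ)`, with `(B_L^b/λ₁)·cond(Σ) ≤ Tr[V_b^H] ≤ (B_U^b/λ₁)·cond(Σ)`. -/
theorem stmt9 (n p : ℕ) (hn : 0 < n) (σ2 : ℝ) (hσ2 : 0 < σ2)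
    (A : Matrix (Fin p) (Fin p) ℝ) (hA : A.PosDef)
    (B : Matrix (Fin p) (Fin n) ℝ)
    (eig : Fin n → ℝ) (evec : Fin n → (Fin n → ℝ))
    -- eigenvalues positive and sorted in decreasing order
    (heig_pos : ∀ i, 0 < eig i)
    (heig_mono : ∀ i j : Fin n, i ≤ j → eig j ≤ eig i)
    -- orthonormal eigenvectors
    (horth : ∀ i j : Fin n, evec i ⬝ᵥ evec j = if i = j then (1 : ℝ) else 0) :
    -- (i) as `λₙ(Σ)` decreases (i.e. `cond(Σ)` increases), the trace increases
    (∀ lam lam' : ℝ, 0 < lam' → lam' ≤ lam →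
      (∀ i : Fin n, i ≠ (⟨n - 1, Nat.sub_lt hn one_pos⟩ : Fin n) → lam ≤ eig i) →
      TrVbH hn σ2 A B eig evec lam ≤ TrVbH hn σ2 A B eig evec lam') ∧
    -- (ii) bounds linear in the condition number `cond(Σ) = λ₁(Σ)/λₙ(Σ)`
    ((evec (⟨n - 1, Nat.sub_lt hn one_pos⟩ : Fin n)) ᵥ* (Bᵀ * A⁻¹) ≠ 0 →
      ∃ BL BU : ℝ, 0 < BL ∧ 0 < BU ∧
        ∀ lam : ℝ, 0 < lam →
          (∀ i : Fin n, i ≠ (⟨n - 1, Nat.sub_lt hn one_pos⟩ : Fin n) → lam ≤ eig i) →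
          BL / eig (⟨0, hn⟩ : Fin n) * (eig (⟨0, hn⟩ : Fin n) / lam) ≤
              TrVbH hn σ2 A B eig evec lam ∧
            TrVbH hn σ2 A B eig evec lam ≤
              BU / eig (⟨0, hn⟩ : Fin n) * (eig (⟨0, hn⟩ : Fin n) / lam)) := by
  set lst : Fin n := ⟨n - 1, Nat.sub_lt hn one_pos⟩ with hlst
  set c : Fin n → ℝ := fun i => ∑ j : Fin p, ((Matrix.of evec * Bᵀ * A⁻¹) i j) ^ 2 with hc
  have hc_nonneg : ∀ i, 0 ≤ c i := fun i => Finset.sum_nonneg fun j _ => sq_nonneg _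
  have hμne : ∀ lam : ℝ, 0 < lam →
      ∀ i : Fin n, (if i = lst then lam else eig i) ≠ 0 := by
    intro lam hlam i
    split
    · exact ne_of_gt hlam
    · exact ne_of_gt (heig_pos i)
  have hfor : ∀ lam : ℝ, 0 < lam → TrVbH hn σ2 A B eig evec lam =
      4 * σ2 * ∑ i : Fin n, (if i = lst then lam else eig i)⁻¹ * c i := by
    intro lam hlam
    exact TrVbH_eq hn σ2 A hA B eig evec horth lam (hμne lam hlam)
  have h4σ : (0:ℝ) ≤ 4 * σ2 := by positivity
  constructor
  · intro lam lam' hlam' hle _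
    have hlam : 0 < lam := lt_of_lt_of_le hlam' hle
    rw [hfor lam hlam, hfor lam' hlam']
    apply mul_le_mul_of_nonneg_left _ h4σ
    apply Finset.sum_le_sum
    intro i _
    by_cases hi : i = lst
    · simp only [hi, if_pos rfl]
      exact mul_le_mul_of_nonneg_right (inv_anti₀ hlam' hle) (hc_nonneg _)
    · simp [hi]
  · intro hrow
    -- c lst > 0
    have hclst : 0 < c lst := by
      obtain ⟨j, hj⟩ : ∃ j, (evec lst ᵥ* (Bᵀ * A⁻¹)) j ≠ 0 := by
        by_contra hcon
        push_neg at hcon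
        exact hrow (funext hcon)
      have hMj : (Matrix.of evec * Bᵀ * A⁻¹) lst j = (evec lst ᵥ* (Bᵀ * A⁻¹)) j := by
        simp only [Matrix.mul_assoc, Matrix.mul_apply, Matrix.vecMul, dotProduct,
          Matrix.of_apply, Finset.sum_mul, Finset.mul_sum]
        rw [Finset.sum_comm]
        apply Finset.sum_congr rfl
        intro k _
        apply Finset.sum_congr rfl
        intro l _
        ring
      have : 0 < ((Matrix.of evec * Bᵀ * A⁻¹) lst j) ^ 2 := by
        rw [hMj]; positivity
      refine lt_of_lt_of_le this ?_
      exact Finset.single_le_sum (f := fun k => ((Matrix.of evec * Bᵀ * A⁻¹) lst k) ^ 2)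
        (fun k _ => sq_nonneg _) (Finset.mem_univ j)
    set e1 : ℝ := eig (⟨0, hn⟩ : Fin n) with he1
    have he1pos : 0 < e1 := heig_pos _
    set S : ℝ := ∑ i ∈ Finset.univ.erase lst, (eig i)⁻¹ * c i with hS
    have hSnn : 0 ≤ S := Finset.sum_nonneg fun i _ => by
      have := heig_pos i
      have := hc_nonneg i
      positivity
    refine ⟨4 * σ2 * c lst, 4 * σ2 * (c lst + S * e1), by positivity, by positivity, ?_⟩
    intro lam hlam hbound
    have hsum : ∑ i : Fin n, (if i = lst then lam else eig i)⁻¹ * c i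
        = lam⁻¹ * c lst + S := by
      rw [← Finset.add_sum_erase _ _ (Finset.mem_univ lst)]
      simp only [if_pos rfl]
      congr 1
      apply Finset.sum_congr rfl
      intro i hi
      rw [if_neg (Finset.ne_of_mem_erase hi)]
    have hTr : TrVbH hn σ2 A B eig evec lam = 4 * σ2 * (lam⁻¹ * c lst + S) := by
      rw [hfor lam hlam, hsum]
    have hsimp : ∀ x : ℝ, x / e1 * (e1 / lam) = x / lam := by
      intro x
      field_simp
    rw [hTr, hsimp, hsimp]
    have hSl : S * lam ≤ S * e1 := by
      rcases eq_or_lt_of_le (Nat.succ_le_of_lt hn) with h1 | h1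
      · have : Finset.univ.erase lst = (∅ : Finset (Fin n)) := by
          apply Finset.eq_empty_of_forall_notMem
          intro i hi
          exact (Finset.ne_of_mem_erase hi) (Fin.ext (by omega))
        rw [hS, this, Finset.sum_empty] at *
        simp
      · have h0ne : (⟨0, hn⟩ : Fin n) ≠ lst := by
          intro h
          have := congrArg Fin.val h
          simp [hlst] at this
          omega
        exact mul_le_mul_of_nonneg_left (hbound _ h0ne) hSnn
    constructor
    · rw [div_le_iff₀ hlam]
      have : 4 * σ2 * (lam⁻¹ * c lst) ≤ 4 * σ2 * (lam⁻¹ * c lst + S) := by nlinarith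
      calc 4 * σ2 * c lst = 4 * σ2 * (lam⁻¹ * c lst) * lam := by
            field_simp
        _ ≤ 4 * σ2 * (lam⁻¹ * c lst + S) * lam := by nlinarith
    · rw [le_div_iff₀ hlam]
      have expand : 4 * σ2 * (lam⁻¹ * c lst + S) * lam = 4 * σ2 * (c lst + S * lam) := by
        field_simp
      rw [expand]
      nlinarith
end

section
/- Let B∈ℝ^{m₁×m₁} be positive definite with eigenvalues λ₁(B)≥…≥λ_{m₁}(B)>0, unit eigenvector u associated with λ_{m₁}(B), and condition number cond(B)=λ₁(B)/λ_{m₁}(B). (1) For A∈ℝ^{m₁×m₂} and any positive integer k, if uᵀA ≠ 0 then, with B_L=uᵀAAᵀu and B_U=Tr(AAᵀ) (both positive and independent of cond(B)), B_L·cond(B)ᵏ/λ₁(B)ᵏ ≤ Tr(AᵀB⁻ᵏA) ≤ B_U·cond(B)ᵏ/λ₁(B)ᵏ. (2) If m₁=m₂ and uᵀAu ≠ 0 then, with B_L=(uᵀAu)² and B_U=Tr(AAᵀ), B_L·cond(B)³/λ₁(B)³ ≤ Tr(B⁻¹AᵀB⁻¹AB⁻¹) ≤ B_U·cond(B)³/λ₁(B)³.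 -/
/-!
Put `C = B⁻¹` and `μ = 1 / λ_{m₁}`, so that `(λ₁ / λ_{m₁})ᵏ / λ₁ᵏ = μᵏ`. In the Loewner order
`μᵏ uuᵀ ≤ Cᵏ ≤ μᵏ I`: the upper bound follows from `C ≤ μ I` by the functional calculus, the lower
one from `Cᵏ - μᵏ uuᵀ = (I - uuᵀ) Cᵏ (I - uuᵀ)`. Conjugating by `A` and taking traces gives (1).
For (2), `C Aᵀ C A C = Xᵀ C X` with `X = A C` and `X Xᵀ = A C² Aᵀ`, so the same bounds, applied
once to `C` and once to `C²`, produce the cube.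
-/

open Matrix
open scoped MatrixOrder

lemma pow_le_algebraMap_pow {A : Type*} [Ring A] [StarRing A] [PartialOrder A]
    [StarOrderedRing A] [Algebra ℝ A] [TopologicalSpace A]
    [ContinuousFunctionalCalculus ℝ A IsSelfAdjoint] [NonnegSpectrumClass ℝ A]
    {a : A} {c : ℝ} (ha : 0 ≤ a) (h : a ≤ algebraMap ℝ A c) (k : ℕ) :
    a ^ k ≤ algebraMap ℝ A (c ^ k) := by
  rw [← cfc_pow_id (R := ℝ) a k]
  refine cfc_le_algebraMap _ _ a fun x hx => ?_
  exact pow_le_pow_left₀ (spectrum_nonneg_of_nonneg ha hx)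
    ((le_algebraMap_iff_spectrum_le).1 h x hx) k

namespace Matrix

variable {n p : Type*} [Fintype n] [Fintype p]

lemma trace_transpose_mul_mul_mono {M N : Matrix n n ℝ} (h : N ≤ M) (A : Matrix n p ℝ) :
    (Aᵀ * N * A).trace ≤ (Aᵀ * M * A).trace := by
  have := ((Matrix.le_iff.1 h).conjTranspose_mul_mul_same A).trace_nonneg
  rw [conjTranspose_eq_transpose_of_trivial, Matrix.mul_sub, Matrix.sub_mul, trace_sub] at this
  linarith

lemma dotProduct_mulVec_mono {M N : Matrix n n ℝ} (h : N ≤ M) (x : n → ℝ) :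
    x ⬝ᵥ (N *ᵥ x) ≤ x ⬝ᵥ (M *ᵥ x) := by
  have := (Matrix.le_iff.1 h).dotProduct_mulVec_nonneg x
  rw [star_trivial, sub_mulVec, dotProduct_sub] at this
  linarith

lemma trace_transpose_mul_smul_one_mul [DecidableEq n] (c : ℝ) (A : Matrix n p ℝ) :
    (Aᵀ * (c • (1 : Matrix n n ℝ)) * A).trace = c * (A * Aᵀ).trace := by
  rw [Matrix.mul_smul, Matrix.mul_one, Matrix.smul_mul, trace_smul, trace_mul_comm, smul_eq_mul]

lemma dotProduct_self_pos {v : n → ℝ} (hv : v ≠ 0) : 0 < v ⬝ᵥ v :=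
  (dotProduct_self_star_nonneg v).lt_of_ne' (dotProduct_self_eq_zero.not.2 hv)

lemma dotProduct_mul_transpose_mulVec (A : Matrix n p ℝ) (u : n → ℝ) :
    u ⬝ᵥ ((A * Aᵀ) *ᵥ u) = (u ᵥ* A) ⬝ᵥ (u ᵥ* A) := by
  rw [← mulVec_mulVec, dotProduct_mulVec, mulVec_transpose]

lemma trace_transpose_mul_smul_vecMulVec_mul (c : ℝ) (A : Matrix n p ℝ) (u : n → ℝ) :
    (Aᵀ * (c • vecMulVec u u) * A).trace = c * u ⬝ᵥ ((A * Aᵀ) *ᵥ u) := by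
  rw [Matrix.mul_smul, Matrix.smul_mul, trace_smul, mul_vecMulVec, vecMulVec_mul, trace_vecMulVec,
    mulVec_transpose, dotProduct_mul_transpose_mulVec, smul_eq_mul]

lemma dotProduct_vecMulVec_mulVec (u x : n → ℝ) :
    x ⬝ᵥ (vecMulVec u u *ᵥ x) = (u ⬝ᵥ x) ^ 2 := by
  rw [vecMulVec_mulVec, op_smul_eq_smul, dotProduct_smul, smul_eq_mul, dotProduct_comm, sq]

lemma PosSemidef.smul_vecMulVec_le [DecidableEq n] {M : Matrix n n ℝ} (hM : M.PosSemidef)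
    {u : n → ℝ} (hu : u ⬝ᵥ u = 1) {ν : ℝ} (hMu : M *ᵥ u = ν • u) :
    ν • vecMulVec u u ≤ M := by
  set P := vecMulVec u u
  have hMt : Mᵀ = M := (isHermitian_iff_isSymm.1 hM.isHermitian).eq
  have hPt : Pᵀ = P := transpose_vecMulVec u u
  have hPP : P * P = P := by rw [vecMulVec_mul_vecMulVec, hu, one_smul]
  have hMP : M * P = ν • P := by rw [mul_vecMulVec, hMu, smul_vecMulVec]
  have hPM : P * M = ν • P := by
    rw [vecMulVec_mul, ← mulVec_transpose, hMt, hMu, vecMulVec_smul]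
  have key : M - ν • P = (1 - P)ᴴ * M * (1 - P) := by
    rw [conjTranspose_eq_transpose_of_trivial, transpose_sub, transpose_one, hPt]
    simp only [Matrix.sub_mul, Matrix.mul_sub, Matrix.one_mul, Matrix.mul_one, hMP, hPM,
      Matrix.smul_mul, hPP]
    abel
  rw [Matrix.le_iff, key]
  exact hM.conjTranspose_mul_mul_same _

lemma le_smul_one_of_dotProduct_mulVec_le [DecidableEq n] {M : Matrix n n ℝ} (hM : M.IsHermitian)
    {c : ℝ} (h : ∀ x, x ⬝ᵥ (M *ᵥ x) ≤ c * (x ⬝ᵥ x)) : M ≤ c • 1 := by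
  have hsub : (c • 1 - M).IsHermitian := (isHermitian_one.smul (.all c)).sub hM
  refine Matrix.le_iff.2 (.of_dotProduct_mulVec_nonneg hsub fun x => ?_)
  rw [star_trivial, sub_mulVec, smul_mulVec, one_mulVec, dotProduct_sub, dotProduct_smul,
    smul_eq_mul, sub_nonneg]
  exact h x

lemma trace_mul_transpose_pos {A : Matrix n p ℝ} (hA : A ≠ 0) : 0 < (A * Aᵀ).trace := by
  have h := posSemidef_self_mul_conjTranspose A
  rw [conjTranspose_eq_transpose_of_trivial] at h
  refine h.trace_nonneg.lt_of_ne' fun h0 => hA ?_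
  rwa [h.trace_eq_zero_iff, ← conjTranspose_eq_transpose_of_trivial,
    self_mul_conjTranspose_eq_zero] at h0

namespace PosDef

variable [DecidableEq n] {B : Matrix n n ℝ} (hB : B.PosDef) {lam : ℝ}
include hB

lemma inv_mulVec_of_mulVec_eq_smul {u : n → ℝ} (hlam : lam ≠ 0) (hBu : B *ᵥ u = lam • u) :
    B⁻¹ *ᵥ u = lam⁻¹ • u := by
  have : Invertible B := hB.isUnit.invertible
  refine inv_mulVec_eq_vec ?_
  rw [mulVec_smul, hBu, smul_smul, inv_mul_cancel₀ hlam, one_smul]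

lemma inv_le_inv_smul_one (hlam : 0 < lam) (hmin : ∀ x, lam * (x ⬝ᵥ x) ≤ x ⬝ᵥ (B *ᵥ x)) :
    B⁻¹ ≤ lam⁻¹ • 1 := by
  have : Invertible B := hB.isUnit.invertible
  refine le_smul_one_of_dotProduct_mulVec_le hB.inv.isHermitian fun x => ?_
  set y := B⁻¹ *ᵥ x
  have hxy : B *ᵥ y = x := by rw [mulVec_mulVec, mul_inv_of_invertible, one_mulVec]
  have hy : lam * (y ⬝ᵥ y) ≤ x ⬝ᵥ y := by simpa [hxy, dotProduct_comm y x] using hmin y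
  -- `0 ≤ |x - lam y|²` and `hy` give `lam (x ⬝ y) ≤ |x|²`
  have hsq : 0 ≤ (x - lam • y) ⬝ᵥ (x - lam • y) := dotProduct_self_star_nonneg _
  simp only [sub_dotProduct, dotProduct_sub, smul_dotProduct, dotProduct_smul, smul_eq_mul,
    dotProduct_comm y x] at hsq
  rw [le_inv_mul_iff₀ hlam]
  linarith [mul_le_mul_of_nonneg_left hy hlam.le]

lemma smul_vecMulVec_le_inv_pow {u : n → ℝ} (hu : u ⬝ᵥ u = 1) (hlam : lam ≠ 0)
    (hBu : B *ᵥ u = lam • u) (k : ℕ) : lam⁻¹ ^ k • vecMulVec u u ≤ B⁻¹ ^ k := by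
  refine (hB.inv.posSemidef.pow k).smul_vecMulVec_le hu ?_
  induction k with
  | zero => simp
  | succ k ih =>
    rw [pow_succ, ← mulVec_mulVec, hB.inv_mulVec_of_mulVec_eq_smul hlam hBu, mulVec_smul, ih,
      smul_smul, ← pow_succ']

lemma inv_pow_le_smul_one (hlam : 0 < lam) (hmin : ∀ x, lam * (x ⬝ᵥ x) ≤ x ⬝ᵥ (B *ᵥ x))
    (k : ℕ) : B⁻¹ ^ k ≤ lam⁻¹ ^ k • 1 := by
  have h := pow_le_algebraMap_pow (nonneg_iff_posSemidef.2 hB.inv.posSemidef)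
    (by simpa only [Algebra.algebraMap_eq_smul_one] using hB.inv_le_inv_smul_one hlam hmin) k
  simpa only [Algebra.algebraMap_eq_smul_one] using h

end PosDef

lemma mul_transpose_mul_mul_mul_eq {M : Matrix n n ℝ} (hM : Mᵀ = M) (A : Matrix n n ℝ) :
    M * Aᵀ * M * A * M = (A * M)ᵀ * M * (A * M) := by
  rw [transpose_mul, hM]; simp only [Matrix.mul_assoc]

lemma mul_mul_transpose_eq [DecidableEq n] {M : Matrix n n ℝ} (hM : Mᵀ = M) (A : Matrix n n ℝ) :
    (A * M) * (A * M)ᵀ = Aᵀᵀ * M ^ 2 * Aᵀ := by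
  rw [transpose_mul, hM, transpose_transpose, sq]; simp only [Matrix.mul_assoc]

lemma trace_mul_transpose_mul_mul_mul_le [DecidableEq n] {M : Matrix n n ℝ} (hM : Mᵀ = M)
    {c : ℝ} (hc : 0 ≤ c) (h1 : M ≤ c • 1) (h2 : M ^ 2 ≤ c ^ 2 • 1) (A : Matrix n n ℝ) :
    (M * Aᵀ * M * A * M).trace ≤ c ^ 3 * (A * Aᵀ).trace :=
  calc (M * Aᵀ * M * A * M).trace
      ≤ c * ((A * M) * (A * M)ᵀ).trace := by
        rw [mul_transpose_mul_mul_mul_eq hM, ← trace_transpose_mul_smul_one_mul]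
        exact trace_transpose_mul_mul_mono h1 _
    _ ≤ c * (c ^ 2 * (Aᵀ * Aᵀᵀ).trace) := by
        rw [mul_mul_transpose_eq hM, ← trace_transpose_mul_smul_one_mul]
        exact mul_le_mul_of_nonneg_left (trace_transpose_mul_mul_mono h2 _) hc
    _ = c ^ 3 * (A * Aᵀ).trace := by rw [transpose_transpose, trace_mul_comm]; ring

lemma le_trace_mul_transpose_mul_mul_mul [DecidableEq n] {M : Matrix n n ℝ} (hM : Mᵀ = M)
    {c : ℝ} (hc : 0 ≤ c) {u : n → ℝ} (h1 : c • vecMulVec u u ≤ M)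
    (h2 : c ^ 2 • vecMulVec u u ≤ M ^ 2) (A : Matrix n n ℝ) :
    c ^ 3 * (u ⬝ᵥ (A *ᵥ u)) ^ 2 ≤ (M * Aᵀ * M * A * M).trace :=
  calc c ^ 3 * (u ⬝ᵥ (A *ᵥ u)) ^ 2
      = c * ((Aᵀ *ᵥ u) ⬝ᵥ ((c ^ 2 • vecMulVec u u) *ᵥ (Aᵀ *ᵥ u))) := by
        rw [smul_mulVec, dotProduct_smul, dotProduct_vecMulVec_mulVec, mulVec_transpose,
          dotProduct_mulVec u A u, dotProduct_comm u, smul_eq_mul]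
        ring
    _ ≤ c * ((Aᵀ *ᵥ u) ⬝ᵥ (M ^ 2 *ᵥ (Aᵀ *ᵥ u))) :=
        mul_le_mul_of_nonneg_left (dotProduct_mulVec_mono h2 _) hc
    _ = c * (u ⬝ᵥ (((A * M) * (A * M)ᵀ) *ᵥ u)) := by
        rw [mul_mul_transpose_eq hM, ← mulVec_mulVec, ← mulVec_mulVec, dotProduct_mulVec u,
          vecMul_transpose]
    _ = ((A * M)ᵀ * (c • vecMulVec u u) * (A * M)).trace :=
        (trace_transpose_mul_smul_vecMulVec_mul c _ u).symm
    _ ≤ (M * Aᵀ * M * A * M).trace := by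
        rw [mul_transpose_mul_mul_mul_eq hM]
        exact trace_transpose_mul_mul_mono h1 _

end Matrix

theorem stmt19_general (m1 m2 : ℕ)
    (B : Matrix (Fin m1) (Fin m1) ℝ) (hB : B.PosDef)
    (lam1 lamm : ℝ) (hlamm : 0 < lamm) (hle : lamm ≤ lam1)
    (u : Fin m1 → ℝ) (hu_norm : u ⬝ᵥ u = 1)
    -- `u` is a unit eigenvector of `B` for the smallest eigenvalue `λ_{m₁}(B)`
    (hu_eig : B *ᵥ u = lamm • u)
    -- `λ₁(B)` and `λ_{m₁}(B)` are the largest and smallest eigenvalues of `B`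
    (hlamm_min : ∀ x : Fin m1 → ℝ, lamm * (x ⬝ᵥ x) ≤ x ⬝ᵥ (B *ᵥ x)) :
    -- (1) for `A ∈ ℝ^{m₁×m₂}` with `uᵀA ≠ 0`, with `B_L = uᵀAAᵀu`, `B_U = Tr(AAᵀ)`
    (∀ (A : Matrix (Fin m1) (Fin m2) ℝ) (k : ℕ), 0 < k → u ᵥ* A ≠ 0 →
      0 < u ⬝ᵥ ((A * Aᵀ) *ᵥ u) ∧ 0 < (A * Aᵀ).trace ∧
        (u ⬝ᵥ ((A * Aᵀ) *ᵥ u)) * (lam1 / lamm) ^ k / lam1 ^ k ≤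
            (Aᵀ * (B⁻¹) ^ k * A).trace ∧
          (Aᵀ * (B⁻¹) ^ k * A).trace ≤
            (A * Aᵀ).trace * (lam1 / lamm) ^ k / lam1 ^ k) ∧
    -- (2) for square `A ∈ ℝ^{m₁×m₁}` with `uᵀAu ≠ 0`,
    --     with `B_L = (uᵀAu)²`, `B_U = Tr(AAᵀ)`
    (∀ A : Matrix (Fin m1) (Fin m1) ℝ, u ⬝ᵥ (A *ᵥ u) ≠ 0 →
      0 < (u ⬝ᵥ (A *ᵥ u)) ^ 2 ∧ 0 < (A * Aᵀ).trace ∧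
        (u ⬝ᵥ (A *ᵥ u)) ^ 2 * (lam1 / lamm) ^ 3 / lam1 ^ 3 ≤
            (B⁻¹ * Aᵀ * B⁻¹ * A * B⁻¹).trace ∧
          (B⁻¹ * Aᵀ * B⁻¹ * A * B⁻¹).trace ≤
            (A * Aᵀ).trace * (lam1 / lamm) ^ 3 / lam1 ^ 3) := by
  have hlam1 : lam1 ≠ 0 := (hlamm.trans_le hle).ne'
  have hcond (k : ℕ) : (lam1 / lamm) ^ k / lam1 ^ k = lamm⁻¹ ^ k := by
    rw [div_eq_mul_inv lam1, mul_pow, mul_div_cancel_left₀ _ (pow_ne_zero k hlam1)]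
  have hlow := hB.smul_vecMulVec_le_inv_pow hu_norm hlamm.ne' hu_eig
  have hup := hB.inv_pow_le_smul_one hlamm hlamm_min
  have hsymm : (B⁻¹)ᵀ = B⁻¹ := (isHermitian_iff_isSymm.1 hB.inv.isHermitian).eq
  refine ⟨fun A k _ huA => ?_, fun A huAu => ?_⟩
  · have hA : A ≠ 0 := by rintro rfl; simp at huA
    refine ⟨?_, trace_mul_transpose_pos hA, ?_, ?_⟩
    · exact dotProduct_mul_transpose_mulVec A u ▸ dotProduct_self_pos huA
    · rw [mul_div_assoc, hcond, mul_comm, ← trace_transpose_mul_smul_vecMulVec_mul]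
      exact trace_transpose_mul_mul_mono (hlow k) A
    · rw [mul_div_assoc, hcond, mul_comm, ← trace_transpose_mul_smul_one_mul]
      exact trace_transpose_mul_mul_mono (hup k) A
  · have hA : A ≠ 0 := by rintro rfl; simp at huAu
    have hlamm_inv : 0 ≤ lamm⁻¹ := inv_nonneg.2 hlamm.le
    refine ⟨sq_pos_of_ne_zero huAu, trace_mul_transpose_pos hA, ?_, ?_⟩
    · rw [mul_div_assoc, hcond, mul_comm]
      exact le_trace_mul_transpose_mul_mul_mul hsymm hlamm_inv (by simpa using hlow 1) (hlow 2) A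
    · rw [mul_div_assoc, hcond, mul_comm]
      exact trace_mul_transpose_mul_mul_mul_le hsymm hlamm_inv (by simpa using hup 1) (hup 2) A

/-- Trace bounds in terms of the condition number
`cond(B) = λ₁(B)/λ_{m₁}(B)` of a positive definite matrix `B`. -/
theorem stmt19 (m1 m2 : ℕ)
    (B : Matrix (Fin m1) (Fin m1) ℝ) (hB : B.PosDef)
    (lam1 lamm : ℝ) (hlamm : 0 < lamm) (hle : lamm ≤ lam1)
    (u : Fin m1 → ℝ) (hu_norm : u ⬝ᵥ u = 1)
    -- `u` is a unit eigenvector of `B` for the smallest eigenvalue `λ_{m₁}(B)`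
    (hu_eig : B *ᵥ u = lamm • u)
    -- `λ₁(B)` and `λ_{m₁}(B)` are the largest and smallest eigenvalues of `B`
    (hlam1_max : ∀ x : Fin m1 → ℝ, x ⬝ᵥ (B *ᵥ x) ≤ lam1 * (x ⬝ᵥ x))
    (hlamm_min : ∀ x : Fin m1 → ℝ, lamm * (x ⬝ᵥ x) ≤ x ⬝ᵥ (B *ᵥ x)) :
    -- (1) for `A ∈ ℝ^{m₁×m₂}` with `uᵀA ≠ 0`, with `B_L = uᵀAAᵀu`, `B_U = Tr(AAᵀ)`
    (∀ (A : Matrix (Fin m1) (Fin m2) ℝ) (k : ℕ), 0 < k → u ᵥ* A ≠ 0 →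
      0 < u ⬝ᵥ ((A * Aᵀ) *ᵥ u) ∧ 0 < (A * Aᵀ).trace ∧
        (u ⬝ᵥ ((A * Aᵀ) *ᵥ u)) * (lam1 / lamm) ^ k / lam1 ^ k ≤
            (Aᵀ * (B⁻¹) ^ k * A).trace ∧
          (Aᵀ * (B⁻¹) ^ k * A).trace ≤
            (A * Aᵀ).trace * (lam1 / lamm) ^ k / lam1 ^ k) ∧
    -- (2) for square `A ∈ ℝ^{m₁×m₁}` with `uᵀAu ≠ 0`,
    --     with `B_L = (uᵀAu)²`, `B_U = Tr(AAᵀ)`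
    (∀ A : Matrix (Fin m1) (Fin m1) ℝ, u ⬝ᵥ (A *ᵥ u) ≠ 0 →
      0 < (u ⬝ᵥ (A *ᵥ u)) ^ 2 ∧ 0 < (A * Aᵀ).trace ∧
        (u ⬝ᵥ (A *ᵥ u)) ^ 2 * (lam1 / lamm) ^ 3 / lam1 ^ 3 ≤
            (B⁻¹ * Aᵀ * B⁻¹ * A * B⁻¹).trace ∧
          (B⁻¹ * Aᵀ * B⁻¹ * A * B⁻¹).trace ≤
            (A * Aᵀ).trace * (lam1 / lamm) ^ 3 / lam1 ^ 3) :=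
  stmt19_general m1 m2 B hB lam1 lamm hlamm hle u hu_norm hu_eig hlamm_min
end
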